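/- Let (I_n) be a partition of ω into consecutive finite intervals, 2^{I_n} = a⁰_n ∪ a¹_n partitions, F(x)(n) = i iff x↾I_n ∈ a^i_n, and for each n let Z_n ⊆ 2^{I_n}. Suppose U ⊆ 2^ω is open, z ∈ 2^ω, and for all n, z↾I_n ∉ Z_n, where Z_n is defined so that for every 'good' finite sequence t and v ∉ Z_n there exist points in both a⁰_n + v and a¹_n + v avoiding the high-density set U^t_n. Then for every y ∈ 2^ω it is NOT the case that F^{-1}(y) ⊆ U + z; i.e., there exists r ∈ F^{-1}(y) with r ∉ U + z. -/
import Mathlib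


open MeasureTheory
open scoped Pointwise ENNReal

/-- Restriction of `x ∈ 2^ω` to the interval `I_n = [k n, k (n+1))`. -/
def restrIco (k : ℕ → ℕ) (n : ℕ) (x : ℕ → ZMod 2) :
    (Set.Ico (k n) (k (n + 1)) : Set ℕ) → ZMod 2 :=
  fun m => x m

/-- The cylinder `[t⌢s]` determined by `t` below `k n` and `s` on `I_n = [k n, k (n+1))`. -/
def cylSet (k : ℕ → ℕ) (n : ℕ) (t : ℕ → ZMod 2)
    (s : (Set.Ico (k n) (k (n + 1)) : Set ℕ) → ZMod 2) : Set (ℕ → ZMod 2) :=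
  {x | (∀ m, m < k n → x m = t m) ∧ ∀ m : (Set.Ico (k n) (k (n + 1)) : Set ℕ), x m = s m}

/-- The high-density nodes `U^t_n = {s ∈ 2^{I_n} : μ([t⌢s] ∩ U)/μ([t⌢s]) ≥ 1 − 2^{-(n+2)}}`. -/
def highDensity (μ : Measure (ℕ → ZMod 2)) (U : Set (ℕ → ZMod 2)) (k : ℕ → ℕ) (n : ℕ)
    (t : ℕ → ZMod 2) : Set ((Set.Ico (k n) (k (n + 1)) : Set ℕ) → ZMod 2) :=
  {s | (1 - (1 / 2 : ℝ≥0∞) ^ (n + 2)) * μ (cylSet k n t s) ≤ μ (cylSet k n t s ∩ U)}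

/-- `t` is good up to `n`: for every `j < n` the restriction `t↾I_j` avoids `U^{t↾<k j}_j`. -/
def goodSeq (μ : Measure (ℕ → ZMod 2)) (U : Set (ℕ → ZMod 2)) (k : ℕ → ℕ) (n : ℕ)
    (t : ℕ → ZMod 2) : Prop :=
  ∀ j, j < n → restrIco k j t ∉ highDensity μ U k j t

/-- If `z↾I_n ∉ Z_n` for all `n`, where each `Z_n` is a set such that for every good
`t` and every `v ∉ Z_n` both shifted pieces `a⁰_n + v` and `a¹_n + v` contain a point
avoiding `U^t_n`, then no fiber `F⁻¹(y) = ∏_n a_n^{y(n)}` is contained in `U + z`. -/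
lemma cylSet_congr (k : ℕ → ℕ) (n : ℕ) {t t' : ℕ → ZMod 2}
    (s : (Set.Ico (k n) (k (n + 1)) : Set ℕ) → ZMod 2)
    (h : ∀ m, m < k n → t m = t' m) : cylSet k n t s = cylSet k n t' s := by
  ext x
  constructor <;> rintro ⟨h1, h2⟩ <;> refine ⟨fun m hm => ?_, h2⟩
  · rw [h1 m hm, h m hm]
  · rw [h1 m hm, h m hm]

lemma highDensity_congr (μ : Measure (ℕ → ZMod 2)) (U : Set (ℕ → ZMod 2)) (k : ℕ → ℕ)
    (n : ℕ) {t t' : ℕ → ZMod 2} (h : ∀ m, m < k n → t m = t' m) :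
    highDensity μ U k n t = highDensity μ U k n t' := by
  ext s
  simp only [highDensity, Set.mem_setOf_eq, cylSet_congr k n s h]

def patchFn (k : ℕ → ℕ) (n : ℕ) (x : ℕ → ZMod 2)
    (w : (Set.Ico (k n) (k (n + 1)) : Set ℕ) → ZMod 2) : ℕ → ZMod 2 :=
  fun m => if h : m ∈ (Set.Ico (k n) (k (n + 1)) : Set ℕ) then w ⟨m, h⟩ else x m

lemma patchFn_lt (k : ℕ → ℕ) (n : ℕ) (x : ℕ → ZMod 2)
    (w : (Set.Ico (k n) (k (n + 1)) : Set ℕ) → ZMod 2) (m : ℕ) (hm : m < k n) :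
    patchFn k n x w m = x m := by
  have : m ∉ (Set.Ico (k n) (k (n + 1)) : Set ℕ) := fun h => absurd h.1 (by omega)
  simp [patchFn, this]

lemma restrIco_patchFn (k : ℕ → ℕ) (n : ℕ) (x : ℕ → ZMod 2)
    (w : (Set.Ico (k n) (k (n + 1)) : Set ℕ) → ZMod 2) :
    restrIco k n (patchFn k n x w) = w := by
  funext m
  simp [restrIco, patchFn, m.2]
theorem stmt15 (μ : Measure (ℕ → ZMod 2)) [IsProbabilityMeasure μ]
    (hμ : ∀ (s : Finset ℕ) (f : ℕ → ZMod 2),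
      μ {x | ∀ i ∈ s, x i = f i} = (1 / 2 : ℝ≥0∞) ^ s.card)
    (k : ℕ → ℕ) (hk0 : k 0 = 0) (hk : ∀ n, k n < k (n + 1))
    (a : (n : ℕ) → Bool → Set ((Set.Ico (k n) (k (n + 1)) : Set ℕ) → ZMod 2))
    (hpart : ∀ n, a n false ∪ a n true = Set.univ)
    (hdisj : ∀ n, Disjoint (a n false) (a n true))
    (hne : ∀ n i, (a n i).Nonempty)
    (U : Set (ℕ → ZMod 2)) (hU : IsOpen U)
    (Z : (n : ℕ) → Set ((Set.Ico (k n) (k (n + 1)) : Set ℕ) → ZMod 2))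
    (hZ : ∀ n (v : (Set.Ico (k n) (k (n + 1)) : Set ℕ) → ZMod 2), v ∉ Z n →
      ∀ t : ℕ → ZMod 2, goodSeq μ U k n t → ∀ i : Bool,
        ∃ w ∈ (· + v) '' (a n i), w ∉ highDensity μ U k n t)
    (z : ℕ → ZMod 2) (hz : ∀ n, restrIco k n z ∉ Z n) :
    ∀ y : ℕ → Bool, ∃ r : ℕ → ZMod 2,
      (∀ n, restrIco k n r ∈ a n (y n)) ∧ r ∉ U + ({z} : Set (ℕ → ZMod 2)) := by
  intro y
  have hkm : StrictMono k := strictMono_nat_of_lt_succ hk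
  -- one construction step
  have step : ∀ n (x : ℕ → ZMod 2), goodSeq μ U k n x →
      ∃ x' : ℕ → ZMod 2, goodSeq μ U k (n + 1) x' ∧ (∀ m, m < k n → x' m = x m) ∧
        restrIco k n x' ∈ (· + restrIco k n z) '' (a n (y n)) ∧
        restrIco k n x' ∉ highDensity μ U k n x' := by
    intro n x hx
    obtain ⟨w, hw1, hw2⟩ := hZ n (restrIco k n z) (hz n) x hx (y n)
    have hagree : ∀ m, m < k n → patchFn k n x w m = x m := patchFn_lt k n x w
    refine ⟨patchFn k n x w, ?_, hagree, ?_, ?_⟩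
    · intro j hj
      rcases Nat.lt_or_ge j n with hjlt | hjge
      · have hle : k (j + 1) ≤ k n := hkm.le_iff_le.2 hjlt
        have e1 : restrIco k j (patchFn k n x w) = restrIco k j x := by
          funext m
          exact hagree m (lt_of_lt_of_le m.2.2 hle)
        have e2 : highDensity μ U k j (patchFn k n x w) = highDensity μ U k j x :=
          highDensity_congr μ U k j fun m hm =>
            hagree m (lt_of_lt_of_le hm ((le_of_lt (hk j)).trans hle))
        rw [e1, e2]
        exact hx j hjlt
      · have hjeq : j = n := by omega
        subst hjeq
        have e1 : restrIco k j (patchFn k j x w) = w := restrIco_patchFn k j x w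
        have e2 : highDensity μ U k j (patchFn k j x w) = highDensity μ U k j x :=
          highDensity_congr μ U k j hagree
        rw [e1, e2]
        exact hw2
    · rw [restrIco_patchFn k n x w]; exact hw1
    · rw [restrIco_patchFn k n x w,
        highDensity_congr μ U k n hagree]
      exact hw2
  choose f h1 h2 h3 h4 using step
  -- the sequence of approximations
  let seq : ∀ n : ℕ, {x : ℕ → ZMod 2 // goodSeq μ U k n x} := fun n =>
    Nat.rec ⟨z, fun j hj => absurd hj (Nat.not_lt_zero j)⟩
      (fun n p => ⟨f n p.1 p.2, h1 n p.1 p.2⟩) n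
  have hseq : ∀ n, (seq (n + 1)).1 = f n (seq n).1 (seq n).2 := fun n => rfl
  have hb : ∀ n m, m < k n → (seq (n + 1)).1 m = (seq n).1 m := by
    intro n m hm
    rw [hseq n]
    exact h2 n (seq n).1 (seq n).2 m hm
  have hstab : ∀ N n, n ≤ N → ∀ m, m < k n → (seq N).1 m = (seq n).1 m := by
    intro N
    induction N with
    | zero =>
      intro n hn m _
      have : n = 0 := Nat.le_zero.mp hn
      subst this; rfl
    | succ N ih =>
      intro n hn m hm
      rcases Nat.lt_or_ge n (N + 1) with h | h
      · have := hb N m (lt_of_lt_of_le hm (hkm.monotone (by omega)))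
        rw [this]
        exact ih n (by omega) m hm
      · have : n = N + 1 := by omega
        subst this; rfl
  set X : ℕ → ZMod 2 := fun m => (seq (m + 1)).1 m with hX
  have hXagree : ∀ n m, m < k n → X m = (seq n).1 m := by
    intro n m hm
    have hmk : m < k (m + 1) := lt_of_lt_of_le (Nat.lt_succ_self m) (hkm.le_apply)
    rcases Nat.le_total (m + 1) n with h | h
    · exact (hstab n (m + 1) h m hmk).symm
    · exact hstab (m + 1) n h m hm
  have hXrestr : ∀ n, restrIco k n X = restrIco k n (seq (n + 1)).1 := by
    intro n
    funext m
    exact hXagree (n + 1) m m.2.2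
  have hXgood : ∀ n, restrIco k n X ∉ highDensity μ U k n X := by
    intro n
    rw [hXrestr n, highDensity_congr μ U k n
      (fun m hm => hXagree (n + 1) m (lt_of_lt_of_le hm (hkm.monotone (Nat.le_succ n)))), hseq n]
    exact h4 n (seq n).1 (seq n).2
  -- X is not in U
  have hXU : X ∉ U := by
    intro hXmem
    obtain ⟨I, u, hIu, hpi⟩ := isOpen_pi_iff.mp hU X hXmem
    set n0 : ℕ := I.sup id + 1 with hn0
    have hC : cylSet k n0 X (restrIco k n0 X) ⊆ U := by
      intro x hx
      apply hpi
      intro i hi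
      have hik : i < k n0 := by
        have : i ≤ I.sup id := Finset.le_sup (f := id) hi
        have : i < n0 := by omega
        exact lt_of_lt_of_le this hkm.le_apply
      rw [hx.1 i hik]
      exact (hIu i hi).2
    have hmemC : restrIco k n0 X ∈ highDensity μ U k n0 X := by
      have hsub : cylSet k n0 X (restrIco k n0 X) ∩ U = cylSet k n0 X (restrIco k n0 X) :=
        Set.inter_eq_left.mpr hC
      rw [highDensity, Set.mem_setOf_eq, hsub]
      calc (1 - (1 / 2 : ℝ≥0∞) ^ (n0 + 2)) * μ (cylSet k n0 X (restrIco k n0 X))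
          ≤ 1 * μ (cylSet k n0 X (restrIco k n0 X)) := mul_le_mul_left tsub_le_self _
        _ = _ := one_mul _
    exact hXgood n0 hmemC
  -- the point r
  refine ⟨fun m => X m + z m, ?_, ?_⟩
  · intro n
    obtain ⟨v, hv, hvw⟩ := by
      have := h3 n (seq n).1 (seq n).2
      rw [← hseq n, ← hXrestr n] at this
      exact this
    have : restrIco k n (fun m => X m + z m) = v := by
      funext m
      have hXm : v m + restrIco k n z m = restrIco k n X m := congrFun hvw m
      have h2m : ∀ c : ZMod 2, c + c = 0 := by decide
      show X m + z m = v m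
      have : X m = v m + z m := hXm.symm
      rw [this, add_assoc, h2m, add_zero]
    rw [this]
    exact hv
  · intro hr
    obtain ⟨u', hu', b, hb', hub⟩ := Set.mem_add.mp hr
    rw [Set.mem_singleton_iff] at hb'
    rw [hb'] at hub
    have : u' = X := by
      funext m
      have := congrFun hub m
      have h2m : ∀ c d : ZMod 2, c + d = d → c = 0 := by decide
      -- u' + z = X + z pointwise
      have hm : u' m + z m = X m + z m := this
      have : u' m = X m := by
        have h2 : ∀ c d e : ZMod 2, c + e = d + e → c = d := by decide
        exact h2 _ _ _ hm
      exact this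
    rw [this] at hu'
    exact hXU hu'
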